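/- arXiv:2006.13686 — 2 statements merged into one kernel-verified Lean document; each statement's English description precedes it below -/
import Mathlib

section
/- Let d₁, d₂ ≥ 1, d = d₁ + d₂, and let Γ ⊂ ℤ^d satisfy: for every x ∈ Γ, some coordinate x_ν with ν ≤ d₁ is divisible by p_ν (where p_ν ≥ 2 are fixed periods). Let W : ℤ^d → ℝ be any potential vanishing outside Γ. Fix ℓ_ν ∈ {1,...,p_ν−1} for ν ≤ d₁ and κ_k ∈ ℝ for k ≤ d₂. Then the bounded function Ψ(x,y) = ∏_{ν=1}^{d₁} sin(πℓ_ν x_ν / p_ν) · ∏_{k=1}^{d₂} exp(iπκ_k y_k) satisfies (H₀ + W)Ψ = E·Ψ with E = 2∑_{ν=1}^{d₁} cos(πℓ_ν/p_ν) + 2∑_{k=1}^{d₂} cos(πκ_k). -/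
open Complex in
lemma sin_pair (θ a : ℝ) : ((Real.sin (θ + a) : ℝ) : ℂ) + (Real.sin (θ - a) : ℂ)
    = 2 * (Real.cos a : ℂ) * (Real.sin θ : ℂ) := by
  have h : Real.sin (θ + a) + Real.sin (θ - a) = 2 * Real.cos a * Real.sin θ := by
    rw [Real.sin_add, Real.sin_sub]; ring
  exact_mod_cast h

open Complex in
lemma exp_pair (b a : ℝ) : Complex.exp (Complex.I * (↑b + ↑a)) + Complex.exp (Complex.I * (↑b - ↑a))
    = 2 * (Real.cos a : ℂ) * Complex.exp (Complex.I * b) := by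
  have h1 : Complex.I * (↑b + ↑a) = (↑b : ℂ) * Complex.I + (↑a : ℂ) * Complex.I := by ring
  have h2 : Complex.I * (↑b - ↑a) = (↑b : ℂ) * Complex.I + (-↑a : ℂ) * Complex.I := by ring
  have h3 : Complex.I * (↑b : ℂ) = (↑b : ℂ) * Complex.I := by ring
  rw [h1, h2, h3]
  simp only [Complex.exp_add, Complex.exp_mul_I, Complex.cos_neg, Complex.sin_neg,
    ← Complex.ofReal_cos]
  ring

open Complex in
/-- The bounded function Ψ(x,y) = ∏ sin(πℓ_ν x_ν/p_ν) · ∏ exp(iπκ_k y_k) is a generalized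
eigenfunction of H₀ + W with eigenvalue E = 2∑cos(πℓ_ν/p_ν) + 2∑cos(πκ_k), for any potential
W supported on a set Γ on which some coordinate x_ν (ν ≤ d₁) is divisible by p_ν. -/
theorem trimmed_extended_state (d₁ d₂ : ℕ) (hd₁ : 1 ≤ d₁) (hd₂ : 1 ≤ d₂)
    (p : Fin d₁ → ℕ) (hp : ∀ ν, 2 ≤ p ν)
    (ℓ : Fin d₁ → ℕ) (hℓ : ∀ ν, 1 ≤ ℓ ν ∧ ℓ ν ≤ p ν - 1)
    (κ : Fin d₂ → ℝ)
    (Γ : Set ((Fin d₁ → ℤ) × (Fin d₂ → ℤ)))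
    (hΓ : ∀ z ∈ Γ, ∃ ν : Fin d₁, (p ν : ℤ) ∣ z.1 ν)
    (W : ((Fin d₁ → ℤ) × (Fin d₂ → ℤ)) → ℝ)
    (hW : ∀ z ∉ Γ, W z = 0)
    (Ψ : ((Fin d₁ → ℤ) × (Fin d₂ → ℤ)) → ℂ)
    (hΨ : ∀ z, Ψ z =
      (∏ ν : Fin d₁, (Real.sin (Real.pi * ℓ ν * (z.1 ν : ℝ) / p ν) : ℂ)) *
        ∏ k : Fin d₂, Complex.exp (Complex.I * Real.pi * κ k * (z.2 k : ℝ)))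
    (E : ℝ)
    (hE : E = 2 * (∑ ν : Fin d₁, Real.cos (Real.pi * ℓ ν / p ν)) +
              2 * (∑ k : Fin d₂, Real.cos (Real.pi * κ k))) :
    ∀ z : (Fin d₁ → ℤ) × (Fin d₂ → ℤ),
      (∑ ν : Fin d₁, (Ψ (Function.update z.1 ν (z.1 ν + 1), z.2) +
                      Ψ (Function.update z.1 ν (z.1 ν - 1), z.2))) +
      (∑ k : Fin d₂, (Ψ (z.1, Function.update z.2 k (z.2 k + 1)) +
                      Ψ (z.1, Function.update z.2 k (z.2 k - 1)))) +
      (W z : ℂ) * Ψ z = (E : ℂ) * Ψ z := by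
  rintro ⟨x, y⟩
  -- notation
  set S : ℂ := ∏ ν : Fin d₁, (Real.sin (Real.pi * ℓ ν * (x ν : ℝ) / p ν) : ℂ) with hS
  set T : ℂ := ∏ k : Fin d₂, Complex.exp (Complex.I * Real.pi * κ k * (y k : ℝ)) with hT
  have hΨxy : Ψ (x, y) = S * T := hΨ (x, y)
  -- factoring the sine product at an updated coordinate
  have upd1 : ∀ (ν : Fin d₁) (v : ℤ),
      (∏ μ : Fin d₁, (Real.sin (Real.pi * ℓ μ * ((Function.update x ν v) μ : ℝ) / p μ) : ℂ))
      = (Real.sin (Real.pi * ℓ ν * (v : ℝ) / p ν) : ℂ) *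
        ∏ μ ∈ Finset.univ.erase ν, (Real.sin (Real.pi * ℓ μ * (x μ : ℝ) / p μ) : ℂ) := by
    intro ν v
    rw [← Finset.mul_prod_erase _ _ (Finset.mem_univ ν), Function.update_self]
    congr 1
    refine Finset.prod_congr rfl fun μ hμ => ?_
    rw [Function.update_of_ne (Finset.ne_of_mem_erase hμ)]
  have upd2 : ∀ (k : Fin d₂) (v : ℤ),
      (∏ j : Fin d₂, Complex.exp (Complex.I * Real.pi * κ j * ((Function.update y k v) j : ℝ)))
      = Complex.exp (Complex.I * Real.pi * κ k * (v : ℝ)) *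
        ∏ j ∈ Finset.univ.erase k, Complex.exp (Complex.I * Real.pi * κ j * (y j : ℝ)) := by
    intro k v
    rw [← Finset.mul_prod_erase _ _ (Finset.mem_univ k), Function.update_self]
    congr 1
    refine Finset.prod_congr rfl fun j hj => ?_
    rw [Function.update_of_ne (Finset.ne_of_mem_erase hj)]
  -- per-direction identities
  have claim1 : ∀ ν : Fin d₁,
      Ψ (Function.update x ν (x ν + 1), y) + Ψ (Function.update x ν (x ν - 1), y)
      = 2 * (Real.cos (Real.pi * ℓ ν / p ν) : ℂ) * (S * T) := by
    intro ν
    rw [hΨ, hΨ]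
    simp only [upd1]
    have hSplit : S = (Real.sin (Real.pi * ℓ ν * (x ν : ℝ) / p ν) : ℂ) *
        ∏ μ ∈ Finset.univ.erase ν, (Real.sin (Real.pi * ℓ μ * (x μ : ℝ) / p μ) : ℂ) :=
      (Finset.mul_prod_erase _ _ (Finset.mem_univ ν)).symm
    have h1 : Real.pi * ℓ ν * ((x ν + 1 : ℤ) : ℝ) / p ν
        = Real.pi * ℓ ν * (x ν : ℝ) / p ν + Real.pi * ℓ ν / p ν := by push_cast; ring
    have h2 : Real.pi * ℓ ν * ((x ν - 1 : ℤ) : ℝ) / p ν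
        = Real.pi * ℓ ν * (x ν : ℝ) / p ν - Real.pi * ℓ ν / p ν := by push_cast; ring
    rw [h1, h2, hSplit]
    have := sin_pair (Real.pi * ℓ ν * (x ν : ℝ) / p ν) (Real.pi * ℓ ν / p ν)
    calc _ = ((Real.sin (Real.pi * ℓ ν * (x ν : ℝ) / p ν + Real.pi * ℓ ν / p ν) : ℂ)
            + (Real.sin (Real.pi * ℓ ν * (x ν : ℝ) / p ν - Real.pi * ℓ ν / p ν) : ℂ)) *
            ((∏ μ ∈ Finset.univ.erase ν, (Real.sin (Real.pi * ℓ μ * (x μ : ℝ) / p μ) : ℂ)) * T) := by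
            ring
      _ = _ := by rw [this]; ring
  have claim2 : ∀ k : Fin d₂,
      Ψ (x, Function.update y k (y k + 1)) + Ψ (x, Function.update y k (y k - 1))
      = 2 * (Real.cos (Real.pi * κ k) : ℂ) * (S * T) := by
    intro k
    rw [hΨ, hΨ]
    simp only [upd2]
    rw [show (∏ ν : Fin d₁, (Real.sin (Real.pi * ℓ ν * (x ν : ℝ) / p ν) : ℂ)) = S from hS.symm]
    have hSplit : T = Complex.exp (Complex.I * Real.pi * κ k * (y k : ℝ)) *
        ∏ j ∈ Finset.univ.erase k, Complex.exp (Complex.I * Real.pi * κ j * (y j : ℝ)) :=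
      (Finset.mul_prod_erase _ _ (Finset.mem_univ k)).symm
    have h1 : Complex.I * Real.pi * κ k * ((y k + 1 : ℤ) : ℝ)
        = Complex.I * ((Real.pi * κ k * (y k : ℝ) : ℝ) + (Real.pi * κ k : ℝ)) := by
      push_cast; ring
    have h2 : Complex.I * Real.pi * κ k * ((y k - 1 : ℤ) : ℝ)
        = Complex.I * ((Real.pi * κ k * (y k : ℝ) : ℝ) - (Real.pi * κ k : ℝ)) := by
      push_cast; ring
    have h3 : Complex.I * Real.pi * κ k * ((y k : ℤ) : ℝ)
        = Complex.I * ((Real.pi * κ k * (y k : ℝ) : ℝ)) := by push_cast; ring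
    rw [h1, h2, hSplit, h3]
    have := exp_pair (Real.pi * κ k * (y k : ℝ)) (Real.pi * κ k)
    calc _ = (Complex.exp (Complex.I * (((Real.pi * κ k * (y k : ℝ) : ℝ) : ℂ) + ((Real.pi * κ k : ℝ) : ℂ)))
            + Complex.exp (Complex.I * (((Real.pi * κ k * (y k : ℝ) : ℝ) : ℂ) - ((Real.pi * κ k : ℝ) : ℂ)))) *
            (S * ∏ j ∈ Finset.univ.erase k, Complex.exp (Complex.I * Real.pi * κ j * (y j : ℝ))) := by
            push_cast; ring
      _ = _ := by rw [this]; push_cast; ring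
  -- the potential term vanishes
  have hWΨ : (W (x, y) : ℂ) * Ψ (x, y) = 0 := by
    by_cases hz : (x, y) ∈ Γ
    · obtain ⟨ν, m, hm⟩ := hΓ _ hz
      have hp0 : (p ν : ℝ) ≠ 0 := by
        have := hp ν; positivity
      have hm' : x ν = (p ν : ℤ) * m := hm
      have hx : ((x ν : ℤ) : ℝ) = (p ν : ℝ) * (m : ℝ) := by exact_mod_cast hm'
      have harg : Real.pi * ℓ ν * ((x ν : ℤ) : ℝ) / p ν = ((ℓ ν * m : ℤ) : ℝ) * Real.pi := by
        have hp0 : (p ν : ℝ) ≠ 0 := by have := hp ν; positivity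
        rw [hx]
        push_cast
        field_simp
      have hsin : (Real.sin (Real.pi * ℓ ν * (x ν : ℝ) / p ν) : ℂ) = 0 := by
        rw [harg, Real.sin_int_mul_pi]; exact Complex.ofReal_zero
      have : Ψ (x, y) = 0 := by
        rw [hΨxy, hS, Finset.prod_eq_zero (Finset.mem_univ ν) hsin, zero_mul]
      rw [this, mul_zero]
    · rw [hW _ hz, Complex.ofReal_zero, zero_mul]
  -- assemble
  calc (∑ ν : Fin d₁, (Ψ (Function.update x ν (x ν + 1), y) + Ψ (Function.update x ν (x ν - 1), y)))
      + (∑ k : Fin d₂, (Ψ (x, Function.update y k (y k + 1)) + Ψ (x, Function.update y k (y k - 1))))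
      + (W (x, y) : ℂ) * Ψ (x, y)
      = (∑ ν : Fin d₁, 2 * (Real.cos (Real.pi * ℓ ν / p ν) : ℂ) * (S * T))
        + (∑ k : Fin d₂, 2 * (Real.cos (Real.pi * κ k) : ℂ) * (S * T)) + 0 := by
        rw [hWΨ, Finset.sum_congr rfl fun ν _ => claim1 ν, Finset.sum_congr rfl fun k _ => claim2 k]
    _ = (E : ℂ) * Ψ (x, y) := by
        rw [hΨxy, hE]
        push_cast
        rw [add_zero, add_mul, Finset.mul_sum, Finset.mul_sum, Finset.sum_mul, Finset.sum_mul]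
end

section
/- Let A be a self-adjoint operator on a finite-dimensional Hilbert space, v a unit vector, and for t ∈ ℝ set A_t = A + t⟨v,·⟩v (rank-one perturbation). Let g : ℝ → ℝ be bounded with 0 ≤ g ≤ 1 and nondecreasing. Then for any a < b: tr g(A_b − λ) − tr g(A_a − λ) ≤ 1. -/
/-!
If `S - T` has rank at most one, the eigenvalues of the self-adjoint maps `S` and `T`, listed in
decreasing order, interlace weakly: `λⱼ(S) ≤ λᵢ(T)` whenever `i < j`. Indeed the span of the
first `j + 1` eigenvectors of `S`, the kernel of `S - T` and the span of the eigenvectors of `T`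
from index `i` on have dimensions adding up to more than `2n`, so they share a vector `x ≠ 0`,
and `λⱼ(S) ‖x‖² ≤ re ⟪x, S x⟫ = re ⟪x, T x⟫ ≤ λᵢ(T) ‖x‖²`.

Here `A_b - A_a = (b - a) v v*` has rank one. Writing `β` and `α` for the decreasing
eigenvalues of `A_b` and `A_a`, monotonicity of `g` gives `g(βₖ₊₁ - λ) ≤ g(αₖ - λ)`, so in
`∑ g(β - λ) - ∑ g(α - λ)` only `g(β₀ - λ) ≤ 1` is left unmatched, while `g ≥ 0`.
-/

open scoped InnerProductSpace
open Module Submodule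

variable {𝕜 E ι : Type*} [RCLike 𝕜] [NormedAddCommGroup E] [InnerProductSpace 𝕜 E] [Fintype ι]

theorem Submodule.finrank_add_finrank_le_finrank_inf_add {K V : Type*} [DivisionRing K]
    [AddCommGroup V] [Module K V] [FiniteDimensional K V] (U W : Submodule K V) :
    finrank K U + finrank K W ≤ finrank K ↥(U ⊓ W) + finrank K V := by
  have := Submodule.finrank_sup_add_finrank_inf_eq U W
  have := (U ⊔ W).finrank_le
  omega

namespace OrthonormalBasis

variable (b : OrthonormalBasis ι 𝕜 E)

theorem finrank_span_image (s : Finset ι) :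
    finrank 𝕜 (span 𝕜 (b '' s)) = s.card := by
  rw [Set.image_eq_range]
  exact (finrank_span_eq_card (b.orthonormal.linearIndependent.comp ((↑) : s → ι)
    Subtype.val_injective)).trans (Fintype.card_coe s)

theorem inner_eq_zero_of_mem_span_image {s : Set ι} {x : E} (hx : x ∈ span 𝕜 (b '' s))
    {i : ι} (hi : i ∉ s) : ⟪b i, x⟫_𝕜 = 0 := by
  refine (span_le.2 ?_ hx : x ∈ (𝕜 ∙ b i)ᗮ) |> (mem_orthogonal_singleton_iff_inner_right).1
  rintro _ ⟨j, hj, rfl⟩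
  exact (mem_orthogonal_singleton_iff_inner_right).2 (b.orthonormal.2 fun h => hi (h ▸ hj))

variable {T : E →ₗ[𝕜] E} {μ : ι → ℝ}

theorem re_inner_apply_self_eq_sum (hb : ∀ i, T (b i) = (μ i : 𝕜) • b i) (x : E) :
    RCLike.re ⟪x, T x⟫_𝕜 = ∑ i, μ i * ‖⟪b i, x⟫_𝕜‖ ^ 2 := by
  have hTx : T x = ∑ i, (⟪b i, x⟫_𝕜 * μ i) • b i := by
    conv_lhs => rw [← b.sum_repr' x]
    simp only [map_sum, map_smul, hb, smul_smul]
  rw [hTx, inner_sum, map_sum]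
  refine Finset.sum_congr rfl fun i _ => ?_
  rw [inner_smul_right, ← inner_conj_symm x (b i), mul_right_comm, RCLike.mul_conj]
  norm_cast
  ring

theorem mul_norm_sq_le_re_inner_apply_self (hb : ∀ i, T (b i) = (μ i : 𝕜) • b i) {c : ℝ} {x : E}
    (hx : ∀ i, μ i < c → ⟪b i, x⟫_𝕜 = 0) : c * ‖x‖ ^ 2 ≤ RCLike.re ⟪x, T x⟫_𝕜 := by
  rw [b.re_inner_apply_self_eq_sum hb, ← b.sum_sq_norm_inner_right, Finset.mul_sum]
  refine Finset.sum_le_sum fun i _ => ?_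
  by_cases hi : μ i < c
  · simp [hx i hi]
  · exact mul_le_mul_of_nonneg_right (not_lt.1 hi) (sq_nonneg _)

theorem re_inner_apply_self_le_mul_norm_sq (hb : ∀ i, T (b i) = (μ i : 𝕜) • b i) {c : ℝ} {x : E}
    (hx : ∀ i, c < μ i → ⟪b i, x⟫_𝕜 = 0) : RCLike.re ⟪x, T x⟫_𝕜 ≤ c * ‖x‖ ^ 2 := by
  rw [b.re_inner_apply_self_eq_sum hb, ← b.sum_sq_norm_inner_right, Finset.mul_sum]
  refine Finset.sum_le_sum fun i _ => ?_
  by_cases hi : c < μ i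
  · simp [hx i hi]
  · exact mul_le_mul_of_nonneg_right (not_lt.1 hi) (sq_nonneg _)

end OrthonormalBasis

namespace LinearMap.IsSymmetric

variable [FiniteDimensional 𝕜 E] {n : ℕ} {S T : E →ₗ[𝕜] E}

theorem eigenvalues_le_of_finrank_range_sub_le_one (hS : S.IsSymmetric) (hT : T.IsSymmetric)
    (hn : finrank 𝕜 E = n) (hST : finrank 𝕜 (range (S - T)) ≤ 1) {i j : Fin n} (hij : i < j) :
    hS.eigenvalues hn j ≤ hT.eigenvalues hn i := by
  set eS := hS.eigenvectorBasis hn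
  set eT := hT.eigenvectorBasis hn
  set V₁ := span 𝕜 (eS '' (Finset.Iic j : Set (Fin n)))
  set V₂ := span 𝕜 (eT '' (Finset.Ici i : Set (Fin n)))
  have hV₁ : finrank 𝕜 V₁ = j + 1 := by rw [eS.finrank_span_image, Fin.card_Iic]
  have hV₂ : finrank 𝕜 V₂ = n - i := by rw [eT.finrank_span_image, Fin.card_Ici]
  have hker : n ≤ finrank 𝕜 (ker (S - T)) + 1 := by
    have := (S - T).finrank_range_add_finrank_ker
    omega
  obtain ⟨x, ⟨⟨hx₁, hxker⟩, hx₂⟩, hx0⟩ : ∃ x ∈ V₁ ⊓ ker (S - T) ⊓ V₂, x ≠ 0 := by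
    refine Submodule.exists_mem_ne_zero_of_ne_bot fun h => ?_
    have h₁ := finrank_add_finrank_le_finrank_inf_add V₁ (ker (S - T))
    have h₂ := finrank_add_finrank_le_finrank_inf_add (V₁ ⊓ ker (S - T)) V₂
    rw [h, finrank_bot] at h₂
    have : (i : ℕ) < j := hij
    omega
  have hSx : S x = T x := sub_eq_zero.1 hxker
  have hlow : hS.eigenvalues hn j * ‖x‖ ^ 2 ≤ RCLike.re ⟪x, S x⟫_𝕜 :=
    eS.mul_norm_sq_le_re_inner_apply_self (hS.apply_eigenvectorBasis hn) fun k hk =>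
      eS.inner_eq_zero_of_mem_span_image hx₁ fun hkj =>
        hk.not_ge (hS.eigenvalues_antitone hn (Finset.mem_Iic.1 hkj))
  have hup : RCLike.re ⟪x, T x⟫_𝕜 ≤ hT.eigenvalues hn i * ‖x‖ ^ 2 :=
    eT.re_inner_apply_self_le_mul_norm_sq (hT.apply_eigenvectorBasis hn) fun k hk =>
      eT.inner_eq_zero_of_mem_span_image hx₂ fun hik =>
        hk.not_ge (hT.eigenvalues_antitone hn (Finset.mem_Ici.1 hik))
  rw [hSx] at hlow
  exact le_of_mul_le_mul_right (hlow.trans hup) (by positivity)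

end LinearMap.IsSymmetric

namespace Matrix.IsHermitian

variable {n : Type*} [Fintype n] [DecidableEq n] {S T : Matrix n n 𝕜}

theorem eigenvalues₀_le_of_rank_sub_le_one (hS : S.IsHermitian) (hT : T.IsHermitian)
    (hST : (S - T).rank ≤ 1) {i j : Fin (Fintype.card n)} (hij : i < j) :
    hS.eigenvalues₀ j ≤ hT.eigenvalues₀ i := by
  refine LinearMap.IsSymmetric.eigenvalues_le_of_finrank_range_sub_le_one _ _ _ ?_ hij
  rw [← map_sub]
  exact (rank_eq_finrank_range_toLin (S - T) (PiLp.basisFun 2 𝕜 n)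
    (PiLp.basisFun 2 𝕜 n)).symm.trans_le hST

theorem sum_comp_eigenvalues {M : Type*} [AddCommMonoid M] (hS : S.IsHermitian) (f : ℝ → M) :
    ∑ i, f (hS.eigenvalues i) = ∑ i, f (hS.eigenvalues₀ i) :=
  Equiv.sum_comp (Fintype.equivOfCardEq (Fintype.card_fin _)).symm (f ∘ hS.eigenvalues₀)

end Matrix.IsHermitian

theorem Fin.sum_le_sum_add_one {m : ℕ} {p q : Fin m → ℝ} (hp : ∀ i, 0 ≤ p i) (hq : ∀ i, q i ≤ 1)
    (hqp : ∀ i j, i < j → q j ≤ p i) : ∑ i, q i ≤ ∑ i, p i + 1 := by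
  cases m with
  | zero => simp
  | succ m =>
    rw [Fin.sum_univ_succ, Fin.sum_univ_castSucc]
    have := Finset.sum_le_sum fun (i : Fin m) (_ : i ∈ Finset.univ) =>
      hqp i.castSucc i.succ i.castSucc_lt_succ
    linarith [hq 0, hp (Fin.last m)]

theorem rank_one_trace_bound_general (n : ℕ) (A : Matrix (Fin n) (Fin n) ℂ)
    (v : EuclideanSpace ℂ (Fin n))
    (g : ℝ → ℝ) (hg01 : ∀ t, 0 ≤ g t ∧ g t ≤ 1) (hgmono : Monotone g)
    (a b : ℝ)
    (P : Matrix (Fin n) (Fin n) ℂ) (hP : ∀ i j, P i j = v i * starRingEnd ℂ (v j))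
    (hAa : (A + (a : ℂ) • P).IsHermitian) (hAb : (A + (b : ℂ) • P).IsHermitian)
    (lam : ℝ) :
    (∑ i, g (hAb.eigenvalues i - lam)) - (∑ i, g (hAa.eigenvalues i - lam)) ≤ 1 := by
  have hP' : P = Matrix.vecMulVec ⇑v (star ⇑v) := Matrix.ext hP
  have hrank : ((A + (b : ℂ) • P) - (A + (a : ℂ) • P)).rank ≤ 1 := by
    rw [add_sub_add_left_eq_sub, ← sub_smul, hP', ← Matrix.smul_vecMulVec]
    exact Matrix.rank_vecMulVec_le _ _
  rw [hAb.sum_comp_eigenvalues fun x => g (x - lam), hAa.sum_comp_eigenvalues fun x => g (x - lam)]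
  have := Fin.sum_le_sum_add_one (fun _ => (hg01 _).1) (fun _ => (hg01 _).2) fun i j hij =>
    hgmono (sub_le_sub_right (hAb.eigenvalues₀_le_of_rank_sub_le_one hAa hrank hij) lam)
  linarith

/-- Rank-one perturbation bound: for A_t = A + t⟨v,·⟩v with v a unit vector and
0 ≤ g ≤ 1 nondecreasing, tr g(A_b − λ) − tr g(A_a − λ) ≤ 1 for a < b. -/
theorem rank_one_trace_bound (n : ℕ) (A : Matrix (Fin n) (Fin n) ℂ) (hA : A.IsHermitian)
    (v : EuclideanSpace ℂ (Fin n)) (hv : ‖v‖ = 1)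
    (g : ℝ → ℝ) (hg01 : ∀ t, 0 ≤ g t ∧ g t ≤ 1) (hgmono : Monotone g)
    (a b : ℝ) (hab : a < b)
    (P : Matrix (Fin n) (Fin n) ℂ) (hP : ∀ i j, P i j = v i * starRingEnd ℂ (v j))
    (hAa : (A + (a : ℂ) • P).IsHermitian) (hAb : (A + (b : ℂ) • P).IsHermitian)
    (lam : ℝ) :
    (∑ i, g (hAb.eigenvalues i - lam)) - (∑ i, g (hAa.eigenvalues i - lam)) ≤ 1 :=
  rank_one_trace_bound_general n A v g hg01 hgmono a b P hP hAa hAb lam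
end
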